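/- Let K_q be uniformly distributed on {1,…,q}. Then the law of √q·â^q_{K_q}/‖â^q‖ converges weakly, as q → ∞, to the point mass at 0. In particular these laws do not converge to the standard normal distribution N(0,1), so the sequence of maximal configurations ŷ^q := √(q(q²−1)/12)·â^q/‖â^q‖ fails the necessary condition for asymptotic permutation-uniformity and hence is not asymptotically permutation-uniform. -/

import Mathlib

open MeasureTheory Filter

/-- `b_k^q = √(3k(q-k)/(q(q+1)))`. -/
noncomputable def bcoef (q k : ℕ) : ℝ :=
  Real.sqrt (3 * k * ((q : ℝ) - k) / (q * ((q : ℝ) + 1)))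

/-- The vector `â^q ∈ ℝ^q` with `â_k^q = b_{k-1}^q - b_k^q`, `k = 1,…,q`. -/
noncomputable def ahat (q : ℕ) : EuclideanSpace ℝ (Fin q) := WithLp.toLp 2 (fun i : Fin q =>
  bcoef q (i : ℕ) - bcoef q ((i : ℕ) + 1))

/-! The sequence `k ↦ b_k^q` rises up to `k = ⌊q/2⌋` and falls afterwards, so
`‖â^q‖₁ = 2 b^q_{⌊q/2⌋} ≤ 2`. For small `k`, `|â_k^q|² ≳ 1/(qk)`, because `√` is steep near `0`,
so `q ‖â^q‖² ≳ log q → ∞`. The mean of `|√q â_k^q / ‖â^q‖|` over `k` is `‖â^q‖₁ / √(q ‖â^q‖²)`,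
which therefore tends to `0`, and convergence in mean to `0` forces the empirical laws to
converge weakly to `δ₀`. Bounded continuous functions determine finite measures on `ℝ`, and
`N(0,1)` has no atom, so the limit cannot also be `N(0,1)`. -/

open Finset Real ProbabilityTheory
open scoped NNReal BoundedContinuousFunction Topology

theorem Finset.sum_range_abs_sub_succ_of_unimodal (f : ℕ → ℝ) {m n : ℕ} (hmn : m ≤ n)
    (hup : ∀ k < m, f k ≤ f (k + 1)) (hdown : ∀ k ∈ Ico m n, f (k + 1) ≤ f k) :
    ∑ k ∈ range n, |f k - f (k + 1)| = 2 * f m - f 0 - f n := by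
  have hrise : ∑ k ∈ range m, |f k - f (k + 1)| = ∑ k ∈ range m, (f (k + 1) - f k) :=
    sum_congr rfl fun k hk => by
      rw [abs_sub_comm, abs_of_nonneg (sub_nonneg.2 (hup k (mem_range.1 hk)))]
  have hfall : ∑ k ∈ Ico m n, |f k - f (k + 1)| = -∑ k ∈ Ico m n, (f (k + 1) - f k) := by
    rw [← sum_neg_distrib]
    exact sum_congr rfl fun k hk => by rw [abs_of_nonneg (sub_nonneg.2 (hdown k hk))]; ring
  rw [← sum_range_add_sum_Ico _ hmn, hrise, hfall, sum_range_sub, sum_Ico_sub _ hmn]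
  ring

theorem Real.sq_div_le_sq_sqrt_sub_sqrt {u v : ℝ} (hv : 0 ≤ v) (hvu : v ≤ u) :
    (u - v) ^ 2 / (4 * u) ≤ (√u - √v) ^ 2 := by
  obtain ⟨s, hs, rfl⟩ : ∃ s, 0 ≤ s ∧ s ^ 2 = u := ⟨√u, sqrt_nonneg u, sq_sqrt (hv.trans hvu)⟩
  obtain ⟨t, ht, rfl⟩ : ∃ t, 0 ≤ t ∧ t ^ 2 = v := ⟨√v, sqrt_nonneg v, sq_sqrt hv⟩
  rw [sqrt_sq hs, sqrt_sq ht]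
  have hts : t ≤ s := pow_le_pow_iff_left₀ ht hs two_ne_zero |>.1 hvu
  rcases hs.eq_or_lt with rfl | hs
  · simpa using sq_nonneg t
  rw [div_le_iff₀ (by positivity)]
  have hsum : (s + t) ^ 2 ≤ 4 * s ^ 2 := by nlinarith
  nlinarith [mul_le_mul_of_nonneg_left hsum (sq_nonneg (s - t))]

theorem bcoef_nonneg (q k : ℕ) : 0 ≤ bcoef q k := sqrt_nonneg _

theorem bcoef_le_one (q k : ℕ) : bcoef q k ≤ 1 := by
  refine sqrt_le_one.2 (div_le_one_of_le₀ ?_ (by positivity))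
  nlinarith [sq_nonneg ((q : ℝ) - 2 * k), (Nat.cast_nonneg q : (0 : ℝ) ≤ q)]

theorem bcoef_le_bcoef_succ {q k : ℕ} (h : 2 * k + 1 ≤ q) : bcoef q k ≤ bcoef q (k + 1) := by
  have h' : 2 * (k : ℝ) + 1 ≤ q := by exact_mod_cast h
  refine sqrt_le_sqrt (div_le_div_of_nonneg_right ?_ (by positivity))
  push_cast
  nlinarith

theorem bcoef_succ_le_bcoef {q k : ℕ} (h : q ≤ 2 * k + 1) : bcoef q (k + 1) ≤ bcoef q k := by
  have h' : (q : ℝ) ≤ 2 * k + 1 := by exact_mod_cast h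
  refine sqrt_le_sqrt (div_le_div_of_nonneg_right ?_ (by positivity))
  push_cast
  nlinarith

theorem sum_abs_ahat_le_two (q : ℕ) : ∑ i, |ahat q i| ≤ 2 := by
  have hsum : ∑ i, |ahat q i| = ∑ k ∈ range q, |bcoef q k - bcoef q (k + 1)| :=
    Fin.sum_univ_eq_sum_range (fun k => |bcoef q k - bcoef q (k + 1)|) q
  rw [hsum, sum_range_abs_sub_succ_of_unimodal (bcoef q) (Nat.div_le_self q 2)
    (fun k hk => bcoef_le_bcoef_succ (by omega))
    (fun k hk => bcoef_succ_le_bcoef (by rw [mem_Ico] at hk; omega))]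
  linarith [bcoef_le_one q (q / 2), bcoef_nonneg q 0, bcoef_nonneg q q]

theorem div_le_mul_sq_bcoef_sub {q j : ℕ} (hj : 4 * (j + 1) ≤ q) :
    3 / (32 * ((j : ℝ) + 1)) ≤ q * (bcoef q j - bcoef q (j + 1)) ^ 2 := by
  have hj' : 4 * ((j : ℝ) + 1) ≤ q := by exact_mod_cast hj
  have hq : (0 : ℝ) < q := by linarith
  have hqj : (0 : ℝ) < q - (j + 1) := by linarith
  set u : ℝ := 3 * ((j : ℝ) + 1) * (q - (j + 1)) / (q * (q + 1)) with hu
  set v : ℝ := 3 * (j : ℝ) * (q - j) / (q * (q + 1)) with hv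
  have hv0 : 0 ≤ v := div_nonneg (mul_nonneg (by positivity) (by linarith)) (by positivity)
  have hvu : v ≤ u := div_le_div_of_nonneg_right (by nlinarith) (by positivity)
  have hgap : q * ((u - v) ^ 2 / (4 * u))
      = 3 * (q - 2 * j - 1) ^ 2 / (4 * (q + 1) * (j + 1) * (q - (j + 1))) := by
    rw [hu, hv]
    field_simp
    ring
  have hmid : ((q : ℝ) + 1) * (q - (j + 1)) ≤ 8 * (q - 2 * j - 1) ^ 2 := by
    have h : (q : ℝ) / 2 + 1 ≤ q - 2 * j - 1 := by linarith
    nlinarith [mul_le_mul h h (by positivity) (by linarith)]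
  calc 3 / (32 * ((j : ℝ) + 1))
      ≤ 3 * (q - 2 * j - 1) ^ 2 / (4 * (q + 1) * (j + 1) * (q - (j + 1))) := by
        rw [div_le_div_iff₀ (by positivity) (by positivity)]
        nlinarith [mul_le_mul_of_nonneg_left hmid (by positivity : (0 : ℝ) ≤ j + 1)]
    _ = q * ((u - v) ^ 2 / (4 * u)) := hgap.symm
    _ ≤ q * (√u - √v) ^ 2 := by
        gcongr
        exact sq_div_le_sq_sqrt_sub_sqrt hv0 hvu
    _ = q * (bcoef q j - bcoef q (j + 1)) ^ 2 := by
        simp only [bcoef, hu, hv]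
        push_cast
        ring

theorem harmonic_le_mul_norm_sq_ahat (q : ℕ) :
    3 / 32 * ∑ j ∈ range (q / 4), 1 / ((j : ℝ) + 1) ≤ q * ‖ahat q‖ ^ 2 := by
  have hnorm : ‖ahat q‖ ^ 2 = ∑ k ∈ range q, (bcoef q k - bcoef q (k + 1)) ^ 2 :=
    (EuclideanSpace.real_norm_sq_eq _).trans
      (Fin.sum_univ_eq_sum_range (fun k => (bcoef q k - bcoef q (k + 1)) ^ 2) q)
  calc 3 / 32 * ∑ j ∈ range (q / 4), 1 / ((j : ℝ) + 1)
      ≤ ∑ j ∈ range (q / 4), q * (bcoef q j - bcoef q (j + 1)) ^ 2 := by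
        rw [mul_sum]
        refine sum_le_sum fun j hj => ?_
        rw [mul_one_div, div_div]
        exact div_le_mul_sq_bcoef_sub (by rw [mem_range] at hj; omega)
    _ ≤ ∑ k ∈ range q, q * (bcoef q k - bcoef q (k + 1)) ^ 2 :=
        sum_le_sum_of_subset_of_nonneg (range_mono (Nat.div_le_self q 4))
          fun _ _ _ => by positivity
    _ = q * ‖ahat q‖ ^ 2 := by rw [hnorm, mul_sum]

theorem tendsto_mul_norm_sq_ahat_atTop : Tendsto (fun q : ℕ => q * ‖ahat q‖ ^ 2) atTop atTop :=
  tendsto_atTop_mono harmonic_le_mul_norm_sq_ahat <|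
    (Real.tendsto_sum_range_one_div_nat_succ_atTop.comp
      (Nat.tendsto_div_const_atTop four_ne_zero)).const_mul_atTop (by norm_num)

theorem sum_abs_smul_div_norm_div {ι : Type*} [Fintype ι] {t : ℝ} (ht : 0 ≤ t)
    (a : EuclideanSpace ℝ ι) :
    (∑ i, |√t * a i / ‖a‖|) / t = (∑ i, |a i|) / √(t * ‖a‖ ^ 2) := by
  rw [sqrt_mul ht, sqrt_sq (norm_nonneg a)]
  simp_rw [abs_div, abs_mul, abs_of_nonneg (sqrt_nonneg t), abs_norm, ← sum_div, ← mul_sum]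
  rcases ht.eq_or_lt with rfl | ht
  · simp
  rcases eq_or_ne ‖a‖ 0 with ha | ha
  · simp [ha]
  have hs : 0 < √t := sqrt_pos.2 ht
  field_simp
  rw [sq_sqrt ht.le, mul_comm]

theorem tendsto_sum_abs_scaled_ahat_div :
    Tendsto (fun q : ℕ => (∑ i, |√q * ahat q i / ‖ahat q‖|) / q) atTop (𝓝 0) := by
  simp_rw [sum_abs_smul_div_norm_div (Nat.cast_nonneg _)]
  refine squeeze_zero (fun q => by positivity)
    (fun q => div_le_div_of_nonneg_right (sum_abs_ahat_le_two q) (sqrt_nonneg _)) ?_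
  exact tendsto_const_nhds.div_atTop (tendsto_sqrt_atTop.comp tendsto_mul_norm_sq_ahat_atTop)

theorem BoundedContinuousFunction.exists_dist_le_add_mul {α : Type*} [PseudoMetricSpace α]
    (f : α →ᵇ ℝ) (a : α) {η : ℝ} (hη : 0 < η) :
    ∃ C, ∀ x, dist (f x) (f a) ≤ η + C * dist x a := by
  obtain ⟨δ, hδ, hf⟩ := Metric.continuousAt_iff.1 (f.continuous.continuousAt (x := a)) η hη
  refine ⟨2 * ‖f‖ / δ, fun x => ?_⟩
  rcases lt_or_ge (dist x a) δ with hx | hx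
  · linarith [hf hx, (show 0 ≤ 2 * ‖f‖ / δ * dist x a by positivity)]
  · calc dist (f x) (f a) ≤ 2 * ‖f‖ / δ * δ := by
          rw [div_mul_cancel₀ _ hδ.ne']; exact f.dist_le_two_norm x a
      _ ≤ η + 2 * ‖f‖ / δ * dist x a := by nlinarith [(show 0 ≤ 2 * ‖f‖ / δ by positivity)]

theorem tendsto_sum_div_of_tendsto_sum_abs_div (x : (q : ℕ) → Fin q → ℝ)
    (hx : Tendsto (fun q : ℕ => (∑ i, |x q i|) / q) atTop (𝓝 0)) (f : ℝ →ᵇ ℝ) :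
    Tendsto (fun q : ℕ => (∑ i, f (x q i)) / q) atTop (𝓝 (f 0)) := by
  rw [Metric.tendsto_atTop]
  intro ε hε
  obtain ⟨C, hC⟩ := f.exists_dist_le_add_mul 0 (half_pos hε)
  have hsmall : ∀ᶠ q : ℕ in atTop, C * ((∑ i, |x q i|) / q) < ε / 2 := by
    refine (hx.const_mul C).eventually (gt_mem_nhds ?_)
    rw [mul_zero]
    exact half_pos hε
  obtain ⟨N, hN⟩ := (hsmall.and (eventually_ge_atTop 1)).exists_forall_of_atTop
  refine ⟨N, fun q hq => ?_⟩
  obtain ⟨hCq, hq1⟩ := hN q hq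
  have hq0 : (0 : ℝ) < q := by exact_mod_cast hq1
  have hcenter : (∑ i, f (x q i)) / q - f 0 = (∑ i, (f (x q i) - f 0)) / q := by
    rw [sum_sub_distrib, sum_const, card_univ, Fintype.card_fin, nsmul_eq_mul]
    field_simp
  calc dist ((∑ i, f (x q i)) / q) (f 0) = |∑ i, (f (x q i) - f 0)| / q := by
        rw [dist_eq, hcenter, abs_div, abs_of_pos hq0]
    _ ≤ (∑ i, (ε / 2 + C * |x q i|)) / q := by
        gcongr
        refine (abs_sum_le_sum_abs _ _).trans (sum_le_sum fun i _ => ?_)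
        simpa [dist_eq] using hC (x q i)
    _ = ε / 2 + C * ((∑ i, |x q i|) / q) := by
        rw [sum_add_distrib, sum_const, card_univ, Fintype.card_fin, nsmul_eq_mul, ← mul_sum]
        field_simp
    _ < ε := by linarith

theorem integral_mul_standard_gaussian_density (f : ℝ → ℝ) :
    ∫ x, f x * (exp (-x ^ 2 / 2) / √(2 * π)) = ∫ x, f x ∂gaussianReal 0 1 := by
  rw [integral_gaussianReal_eq_integral_smul one_ne_zero]
  congr 1 with x
  simp only [gaussianPDFReal, NNReal.coe_one, mul_one, sub_zero, smul_eq_mul]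
  ring

theorem gaussianReal_ne_dirac (μ : ℝ) {v : ℝ≥0} (hv : v ≠ 0) :
    gaussianReal μ v ≠ Measure.dirac μ := by
  intro h
  have := nullSingletonClass_gaussianReal (μ := μ) hv
  simpa [h] using measure_singleton (μ := gaussianReal μ v) μ

/-- Proposition 4.7: the law of `√q â^q_{K_q}/‖â^q‖` (`K_q` uniform on `{1,…,q}`) converges
weakly to the point mass at `0`, and in particular does not converge weakly to `N(0,1)`; so the
maximal configurations are not asymptotically permutation-uniform. -/
theorem stmt13 :
    (∀ f : BoundedContinuousFunction ℝ ℝ,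
      Tendsto (fun q : ℕ => (∑ i : Fin q, f (Real.sqrt q * ahat q i / ‖ahat q‖)) / q) atTop
        (nhds (f 0))) ∧
    ¬ (∀ f : BoundedContinuousFunction ℝ ℝ,
      Tendsto (fun q : ℕ => (∑ i : Fin q, f (Real.sqrt q * ahat q i / ‖ahat q‖)) / q) atTop
        (nhds (∫ x : ℝ, f x * (Real.exp (-x ^ 2 / 2) / Real.sqrt (2 * Real.pi))))) := by
  have hdirac := tendsto_sum_div_of_tendsto_sum_abs_div _ tendsto_sum_abs_scaled_ahat_div
  refine ⟨hdirac, fun hgauss => gaussianReal_ne_dirac 0 one_ne_zero ?_⟩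
  refine ext_of_forall_integral_eq_of_IsFiniteMeasure fun f => ?_
  rw [integral_dirac, ← integral_mul_standard_gaussian_density]
  exact tendsto_nhds_unique (hgauss f) (hdirac f)
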